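/- arXiv:0904.2519 — 3 statements merged into one kernel-verified Lean document; each statement's English description precedes it below -/
import Mathlib

section
/- Let R be a commutative ring and L a Lie algebra over R equipped with a ℤ-grading: a family of R-submodules (g_i)_{i∈ℤ} forming an internal direct sum decomposition of L with ⁅g_i, g_j⁆ ⊆ g_{i+j} for all i, j. If g_i = ⊥ for all i ≥ 0, then for every natural number n the n-th term of the lower central series of L is contained in the supremum ⨆_{i ≤ -(n+1)} g_i. -/
/-!
Let `F p = ⨆ i ≤ p, g i`. The grading makes `F` multiplicative, `⁅F p, F q⁆ ⊆ F (p + q)`, and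
since `g` has no pieces in degree `≥ 0`, `F (-1)` is all of `L`. Each step of the lower central
series brackets with `L = F (-1)`, so by induction the degree bound drops by one each time.
-/

open Submodule

theorem iSup_le_neg_one_eq_iSup {α : Type*} [CompleteLattice α] (f : ℤ → α)
    (hneg : ∀ i : ℤ, 0 ≤ i → f i = ⊥) : ⨆ i ≤ (-1 : ℤ), f i = ⨆ i, f i := by
  have hrest : ⨆ (i) (_ : ¬i ≤ -1), f i = ⊥ := iSup₂_eq_bot.2 fun i hi => hneg i (by omega)
  rw [iSup_split f (· ≤ -1), hrest, sup_bot_eq]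

theorem lie_mem_iSup_le_add {ι R L : Type*} [Add ι] [Preorder ι] [AddLeftMono ι] [AddRightMono ι]
    [CommRing R] [LieRing L] [LieAlgebra R L] {g : ι → Submodule R L}
    (hbr : ∀ i j : ι, ∀ x ∈ g i, ∀ y ∈ g j, ⁅x, y⁆ ∈ g (i + j)) {p q : ι} {x y : L}
    (hx : x ∈ ⨆ i ≤ p, g i) (hy : y ∈ ⨆ j ≤ q, g j) : ⁅x, y⁆ ∈ ⨆ k ≤ p + q, g k := by
  let bracket : L →ₗ[R] L →ₗ[R] L := LieModule.toEnd R L L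
  suffices map₂ bracket (⨆ i ≤ p, g i) (⨆ j ≤ q, g j) ≤ ⨆ k ≤ p + q, g k from
    this (apply_mem_map₂ bracket hx hy)
  simp only [map₂_iSup_left, map₂_iSup_right, iSup_le_iff, map₂_le]
  intro j hj i hi x hx y hy
  exact mem_iSup_of_mem (i + j) (mem_iSup_of_mem (add_le_add hi hj) (hbr i j x hx y hy))

/-- For a Lie algebra graded in negative degrees (like the symbol algebra
`gr(T_xM)` of a filtered manifold), the `n`-th term of the lower central series is
contained in the sum of the graded pieces of degree `≤ -(n+1)`. -/
theorem lowerCentralSeries_le_of_neg_graded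
    {R L : Type*} [CommRing R] [LieRing L] [LieAlgebra R L]
    (g : ℤ → Submodule R L)
    (hint : DirectSum.IsInternal g)
    (hbr : ∀ i j : ℤ, ∀ x ∈ g i, ∀ y ∈ g j, ⁅x, y⁆ ∈ g (i + j))
    (hneg : ∀ i : ℤ, 0 ≤ i → g i = ⊥)
    (n : ℕ) :
    (LieModule.lowerCentralSeries R L L n : Submodule R L) ≤ ⨆ i ≤ -((n : ℤ) + 1), g i := by
  have htop : ⨆ i ≤ (-1 : ℤ), g i = ⊤ := by
    rw [iSup_le_neg_one_eq_iSup g hneg, hint.submodule_iSup_eq_top]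
  induction n with
  | zero => simp [htop]
  | succ n ih =>
    rw [LieModule.lowerCentralSeries_succ, LieIdeal.toLieSubalgebra_toSubmodule,
      LieSubmodule.lieIdeal_oper_eq_linear_span', span_le]
    rintro _ ⟨x, -, m, hm, rfl⟩
    have hx : x ∈ ⨆ i ≤ (-1 : ℤ), g i := htop ▸ mem_top
    have hdeg : -1 + -((n : ℤ) + 1) = -((↑(n + 1) : ℤ) + 1) := by push_cast; ring
    exact hdeg ▸ lie_mem_iSup_le_add hbr hx (ih hm)
end

section
/- Let R be a commutative ring and L a Lie algebra over R equipped with a ℤ-grading (g_i)_{i∈ℤ} with g_i = ⊥ for all i ≥ 0. Define R-submodules h_i of L recursively downward by h_{-1} = g_{-1} and h_{i-1} = the submodule spanned by all brackets ⁅x, y⁆ with x ∈ g_{-1} and y ∈ h_i, for i ≤ -1. Then ⁅h_i, h_j⁆ ⊆ h_{i+j} for all i, j ≤ -1; in particular the direct sum of the h_i is a Lie subalgebra of L containing g_{-1}. -/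
/-!
Write `P i` for the statement `⁅h i, h j⁆ ⊆ h (i + j)` for all `j ≤ -1`. It holds for `i = -1` by
the very definition of `h (j - 1)`, and it passes from `i` to `i - 1`: `h (i - 1)` is spanned by
brackets `⁅a, b⁆` with `a ∈ h (-1)` and `b ∈ h i`, and by the Jacobi identity
`⁅⁅a, b⁆, y⁆ = ⁅a, ⁅b, y⁆⁆ - ⁅b, ⁅a, y⁆⁆`, where both terms lie in `h (i - 1 + j)` by `P (-1)` and
`P i`.
-/

namespace Submodule

variable {R L : Type*} [CommRing R] [LieRing L] [LieAlgebra R L]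

theorem lie_mem_iSup {ι : Sort*} (N : ι → Submodule R L)
    (hN : ∀ i j, ∀ x ∈ N i, ∀ y ∈ N j, ⁅x, y⁆ ∈ ⨆ k, N k) {x y : L}
    (hx : x ∈ ⨆ i, N i) (hy : y ∈ ⨆ i, N i) : ⁅x, y⁆ ∈ ⨆ k, N k := by
  let bracket : L →ₗ[R] L →ₗ[R] L := LieModule.toEnd R L L
  have hle : map₂ bracket (⨆ i, N i) (⨆ j, N j) ≤ ⨆ k, N k := by
    simp only [map₂_iSup_left, map₂_iSup_right, iSup_le_iff, map₂_le]
    exact fun j i x hx y hy => hN i j x hx y hy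
  exact hle (apply_mem_map₂ bracket hx hy)

def iSupLieSubalgebra {ι : Sort*} (N : ι → Submodule R L)
    (hN : ∀ i j, ∀ x ∈ N i, ∀ y ∈ N j, ⁅x, y⁆ ∈ ⨆ k, N k) : LieSubalgebra R L where
  toSubmodule := ⨆ i, N i
  lie_mem' hx hy := lie_mem_iSup N hN hx hy

end Submodule

section GeneratedDownward

variable {R L : Type*} [CommRing R] [LieRing L] [LieAlgebra R L] {h : ℤ → Submodule R L}

def IsGeneratedDownwardByNegOne (h : ℤ → Submodule R L) : Prop :=
  ∀ i : ℤ, i ≤ -1 → h (i - 1) = Submodule.span R {z : L | ∃ x ∈ h (-1), ∃ y ∈ h i, z = ⁅x, y⁆}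

theorem lie_mem_of_mem_neg_one
    (hrec : IsGeneratedDownwardByNegOne h)
    {j : ℤ} (hj : j ≤ -1) {x y : L} (hx : x ∈ h (-1)) (hy : y ∈ h j) :
    ⁅x, y⁆ ∈ h (-1 + j) := by
  rw [neg_add_eq_sub, hrec j hj]
  exact Submodule.subset_span ⟨x, hx, y, hy, rfl⟩

theorem lie_mem_of_mem_sub_one
    (hrec : IsGeneratedDownwardByNegOne h)
    {i : ℤ} (hi : i ≤ -1)
    (ih : ∀ x ∈ h i, ∀ j : ℤ, j ≤ -1 → ∀ y ∈ h j, ⁅x, y⁆ ∈ h (i + j))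
    {x : L} (hx : x ∈ h (i - 1)) {j : ℤ} (hj : j ≤ -1) {y : L} (hy : y ∈ h j) :
    ⁅x, y⁆ ∈ h (i - 1 + j) := by
  rw [hrec i hi] at hx
  induction hx using Submodule.span_induction with
  | mem z hz =>
    obtain ⟨a, ha, b, hb, rfl⟩ := hz
    have hab_y : ⁅a, ⁅b, y⁆⁆ ∈ h (-1 + (i + j)) :=
      lie_mem_of_mem_neg_one hrec (by omega) ha (ih b hb j hj y hy)
    have hba_y : ⁅b, ⁅a, y⁆⁆ ∈ h (i + (-1 + j)) :=
      ih b hb _ (by omega) _ (lie_mem_of_mem_neg_one hrec hj ha hy)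
    rw [lie_lie]
    refine Submodule.sub_mem _ ?_ ?_
    · convert hab_y using 2; ring
    · convert hba_y using 2; ring
  | zero => simp
  | add u v _ _ hu hv => simpa only [add_lie] using Submodule.add_mem _ hu hv
  | smul r u _ hu => simpa only [smul_lie] using Submodule.smul_mem _ r hu

theorem lie_mem_add_of_le_neg_one
    (hrec : IsGeneratedDownwardByNegOne h)
    {i : ℤ} (hi : i ≤ -1) :
    ∀ x ∈ h i, ∀ j : ℤ, j ≤ -1 → ∀ y ∈ h j, ⁅x, y⁆ ∈ h (i + j) := by
  induction i, hi using Int.leInductionDown with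
  | base => exact fun x hx j hj y hy => lie_mem_of_mem_neg_one hrec hj hx hy
  | pred i hi ih => exact fun x hx j hj y hy => lie_mem_of_mem_sub_one hrec hi ih hx hj hy

end GeneratedDownward

theorem bracket_of_generated_pieces_general
    {R L : Type*} [CommRing R] [LieRing L] [LieAlgebra R L]
    (g : ℤ → Submodule R L)
    (h : ℤ → Submodule R L)
    (h1 : h (-1) = g (-1))
    (hrec : ∀ i : ℤ, i ≤ -1 →
      h (i - 1) = Submodule.span R {z : L | ∃ x ∈ g (-1), ∃ y ∈ h i, z = ⁅x, y⁆}) :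
    (∀ i : ℤ, i ≤ -1 → ∀ j : ℤ, j ≤ -1 →
        ∀ x ∈ h i, ∀ y ∈ h j, ⁅x, y⁆ ∈ h (i + j)) ∧
      ∃ K : LieSubalgebra R L,
        (K.toSubmodule = ⨆ i ≤ (-1 : ℤ), h i) ∧ g (-1) ≤ K.toSubmodule := by
  rw [← h1] at hrec ⊢
  have hmul : ∀ i : ℤ, i ≤ -1 → ∀ j : ℤ, j ≤ -1 →
      ∀ x ∈ h i, ∀ y ∈ h j, ⁅x, y⁆ ∈ h (i + j) :=
    fun i hi j hj x hx y hy => lie_mem_add_of_le_neg_one hrec hi x hx j hj y hy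
  let N : {i : ℤ // i ≤ -1} → Submodule R L := fun i => h i
  have hN : ∀ i j, ∀ x ∈ N i, ∀ y ∈ N j, ⁅x, y⁆ ∈ ⨆ k, N k := fun i j x hx y hy =>
    Submodule.mem_iSup_of_mem (⟨i + j, by omega⟩ : {i : ℤ // i ≤ -1})
      (hmul i i.2 j j.2 x hx y hy)
  have hK : (Submodule.iSupLieSubalgebra N hN).toSubmodule = ⨆ i ≤ (-1 : ℤ), h i :=
    (iSup_subtype' (p := fun i : ℤ => i ≤ -1) (f := fun i _ => h i)).symm
  refine ⟨hmul, Submodule.iSupLieSubalgebra N hN, hK, ?_⟩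
  rw [hK]
  exact le_iSup₂_of_le (f := fun i (_ : i ≤ -1) => h i) (-1) le_rfl le_rfl

/-- For a Lie algebra graded in negative degrees, the submodules `h_i` generated
downward from `h_{-1} = g_{-1}` by iterated brackets with `g_{-1}` satisfy
`⁅h_i, h_j⁆ ⊆ h_{i+j}`; in particular their sum is a Lie subalgebra of `L`
containing `g_{-1}`. -/
theorem bracket_of_generated_pieces
    {R L : Type*} [CommRing R] [LieRing L] [LieAlgebra R L]
    (g : ℤ → Submodule R L)
    (hint : DirectSum.IsInternal g)
    (hbr : ∀ i j : ℤ, ∀ x ∈ g i, ∀ y ∈ g j, ⁅x, y⁆ ∈ g (i + j))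
    (hneg : ∀ i : ℤ, 0 ≤ i → g i = ⊥)
    (h : ℤ → Submodule R L)
    (h1 : h (-1) = g (-1))
    (hrec : ∀ i : ℤ, i ≤ -1 →
      h (i - 1) = Submodule.span R {z : L | ∃ x ∈ g (-1), ∃ y ∈ h i, z = ⁅x, y⁆}) :
    (∀ i : ℤ, i ≤ -1 → ∀ j : ℤ, j ≤ -1 →
        ∀ x ∈ h i, ∀ y ∈ h j, ⁅x, y⁆ ∈ h (i + j)) ∧
      ∃ K : LieSubalgebra R L,
        (K.toSubmodule = ⨆ i ≤ (-1 : ℤ), h i) ∧ g (-1) ≤ K.toSubmodule :=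
  bracket_of_generated_pieces_general g h h1 hrec
end

section
/- Let U ⊆ ℝⁿ be an open connected set, x₀ ∈ U, and let A : U → (ℝⁿ →L[ℝ] (ℝᵐ →L[ℝ] ℝᵐ)) be continuous. The set S of maps s : U → ℝᵐ that are differentiable with continuous derivative on U and satisfy fderiv ℝ s x v = A x v (s x) for all x ∈ U and v ∈ ℝⁿ is an ℝ-linear subspace of the space of maps U → ℝᵐ, the evaluation map S → ℝᵐ, s ↦ s x₀, is injective ℝ-linear, and consequently S is a finite-dimensional real vector space of dimension at most m. (This is the paper's conclusion that the solution space of a regular linear system of differential equations of weighted finite type on a filtered manifold is always finite dimensional, established in the local coordinate model after the system is canonically rewritten as a first-order system with injective weighted symbol.) -/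
/-!
A solution vanishing at `x₀` vanishes on all of `U`, so evaluation at `x₀` is an injective linear
map from the solution space to `ℝᵐ`. Along a segment `[x, y]` in a ball on which `‖A‖ ≤ C`, the
restriction `g t = s (x + t • (y - x))` satisfies `‖g' t‖ = ‖A _ (y - x) (g t)‖ ≤ C ‖y - x‖ ‖g t‖`,
so by Grönwall's inequality a zero of `s` at `x` propagates to `y`. Hence the zero set of `s` is
open in `U`; it is also closed in `U` by continuity, so it is all of the connected set `U`.
-/

open Set Filter Topology Metric

variable {E F : Type*} [NormedAddCommGroup E] [NormedSpace ℝ E]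
  [NormedAddCommGroup F] [NormedSpace ℝ F]

theorem eq_zero_of_norm_fderiv_le_mul_norm_on_segment {s : E → F} {x y : E} {K : ℝ}
    (hs : ∀ z ∈ segment ℝ x y, DifferentiableAt ℝ s z)
    (hK : ∀ z ∈ segment ℝ x y, ‖fderiv ℝ s z (y - x)‖ ≤ K * ‖s z‖)
    (hx : s x = 0) : s y = 0 := by
  have hmem : ∀ t ∈ Icc (0 : ℝ) 1, AffineMap.lineMap x y t ∈ segment ℝ x y := fun t ht => by
    rw [segment_eq_image_lineMap]; exact mem_image_of_mem _ ht
  have hderiv : ∀ t ∈ Icc (0 : ℝ) 1, HasDerivAt (fun t => s (AffineMap.lineMap x y t))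
      (fderiv ℝ s (AffineMap.lineMap x y t) (y - x)) t := fun t ht =>
    (hs _ (hmem t ht)).hasFDerivAt.comp_hasDerivAt t AffineMap.hasDerivAt_lineMap
  simpa using eq_zero_of_abs_deriv_le_mul_abs_self_of_eq_zero_right
    (fun t ht => (hderiv t ht).continuousAt.continuousWithinAt)
    (fun t ht => (hderiv t (Ico_subset_Icc_self ht)).hasDerivWithinAt)
    (by simpa using hx) (fun t ht => hK _ (hmem t (Ico_subset_Icc_self ht))) 1 (by simp)

section LinearSystem

variable {U : Set E} {A : E → E →L[ℝ] F →L[ℝ] F} {s : E → F}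

theorem eventually_eq_zero_of_fderiv_eq (hU : IsOpen U) (hA : ContinuousOn A U)
    (hs : ∀ x ∈ U, DifferentiableAt ℝ s x) (heq : ∀ x ∈ U, ∀ v, fderiv ℝ s x v = A x v (s x))
    {x : E} (hx : x ∈ U) (hsx : s x = 0) : ∀ᶠ y in 𝓝 x, s y = 0 := by
  have hAx : ∀ᶠ z in 𝓝 x, A z ∈ closedBall (A x) 1 :=
    (hA.continuousAt (hU.mem_nhds hx)).eventually_mem (closedBall_mem_nhds (A x) one_pos)
  have hbound : ∀ᶠ z in 𝓝 x, z ∈ U ∧ ‖A z‖ ≤ ‖A x‖ + 1 :=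
    (hU.eventually_mem hx).and <|
      hAx.mono fun _ => norm_le_of_mem_closedBall (E := E →L[ℝ] F →L[ℝ] F)
  obtain ⟨r, hr, hball⟩ := eventually_nhds_iff_ball.mp hbound
  filter_upwards [ball_mem_nhds x hr] with y hy
  have hseg : segment ℝ x y ⊆ ball x r := (convex_ball x r).segment_subset (mem_ball_self hr) hy
  refine eq_zero_of_norm_fderiv_le_mul_norm_on_segment (K := (‖A x‖ + 1) * ‖y - x‖)
    (fun z hz => hs z (hball z (hseg hz)).1) (fun z hz => ?_) hsx
  obtain ⟨hzU, hAz⟩ := hball z (hseg hz)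
  calc ‖fderiv ℝ s z (y - x)‖ = ‖A z (y - x) (s z)‖ := by rw [heq z hzU]
    _ ≤ ‖A z‖ * ‖y - x‖ * ‖s z‖ := (A z).le_opNorm₂ _ _
    _ ≤ (‖A x‖ + 1) * ‖y - x‖ * ‖s z‖ := by gcongr

theorem eqOn_zero_of_fderiv_eq (hU : IsOpen U) (hUc : IsPreconnected U) (hA : ContinuousOn A U)
    (hs : ∀ x ∈ U, DifferentiableAt ℝ s x) (heq : ∀ x ∈ U, ∀ v, fderiv ℝ s x v = A x v (s x))
    {x₀ : E} (hx₀ : x₀ ∈ U) (hsx₀ : s x₀ = 0) : EqOn s 0 U := by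
  set Z : Set E := {x | ∀ᶠ y in 𝓝 x, s y = 0}
  have hZ : IsOpen Z := isOpen_setOfPred_eventually_nhds
  have hsc : ContinuousOn s U := fun x hx => (hs x hx).continuousAt.continuousWithinAt
  have hW : IsOpen (U ∩ s ⁻¹' {0}ᶜ) :=
    hsc.isOpen_inter_preimage hU isClosed_singleton.isOpen_compl
  have hcover : U ⊆ Z ∪ (U ∩ s ⁻¹' {0}ᶜ) := fun x hx => by
    by_cases hsx : s x = 0
    · exact Or.inl (eventually_eq_zero_of_fderiv_eq hU hA hs heq hx hsx)
    · exact Or.inr ⟨hx, hsx⟩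
  have hdisj : U ∩ (Z ∩ (U ∩ s ⁻¹' {0}ᶜ)) = ∅ :=
    eq_empty_of_forall_notMem fun x ⟨_, hxZ, _, hsx⟩ => hsx hxZ.self_of_nhds
  rcases isPreconnected_iff_subset_of_disjoint.mp hUc _ _ hZ hW hcover hdisj with hUZ | hUW
  · exact fun x hx => (hUZ hx).self_of_nhds
  · exact absurd hsx₀ (hUW hx₀).2

variable (U A) in
def solutionSubmodule : Submodule ℝ (U → F) where
  carrier := {t | ∃ s : E → F,
    (∀ x ∈ U, DifferentiableAt ℝ s x) ∧
    ContinuousOn (fun x => fderiv ℝ s x) U ∧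
    (∀ x ∈ U, ∀ v, fderiv ℝ s x v = A x v (s x)) ∧
    t = fun u : U => s u}
  zero_mem' := ⟨0, fun _ _ => differentiableAt_const 0, by simpa using continuousOn_const,
    by simp, rfl⟩
  add_mem' := by
    rintro _ _ ⟨s₁, hd₁, hc₁, he₁, rfl⟩ ⟨s₂, hd₂, hc₂, he₂, rfl⟩
    refine ⟨s₁ + s₂, fun x hx => (hd₁ x hx).add (hd₂ x hx),
      (hc₁.add hc₂).congr fun x hx => fderiv_add (hd₁ x hx) (hd₂ x hx), fun x hx v => ?_, rfl⟩
    simp [fderiv_add (hd₁ x hx) (hd₂ x hx), he₁ x hx v, he₂ x hx v]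
  smul_mem' := by
    rintro c _ ⟨s, hd, hc, he, rfl⟩
    refine ⟨c • s, fun x hx => (hd x hx).const_smul c,
      (hc.const_smul c).congr fun x hx => fderiv_const_smul (hd x hx) c, fun x hx v => ?_, rfl⟩
    simp [fderiv_const_smul (hd x hx) c, he x hx v]

variable (A) in
def solutionEval {x₀ : E} (hx₀ : x₀ ∈ U) : solutionSubmodule U A →ₗ[ℝ] F :=
  LinearMap.proj (⟨x₀, hx₀⟩ : U) ∘ₗ (solutionSubmodule U A).subtype

theorem solutionEval_injective (hU : IsOpen U) (hUc : IsPreconnected U) (hA : ContinuousOn A U)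
    {x₀ : E} (hx₀ : x₀ ∈ U) : Function.Injective (solutionEval A hx₀) := by
  refine (injective_iff_map_eq_zero _).mpr fun t ht => ?_
  obtain ⟨s, hd, -, he, hts⟩ := t.2
  have hs₀ : s x₀ = 0 := by simpa [solutionEval, hts] using ht
  ext u
  simpa [hts] using eqOn_zero_of_fderiv_eq hU hUc hA hd he hx₀ hs₀ u.2

end LinearSystem

/-- The space of C¹ solutions on an open connected set `U` of a first-order linear
system `fderiv ℝ s x v = A x v (s x)` (the local model of a weighted order one system
with injective weighted symbol, to which any regular system of weighted finite type
on a filtered manifold is canonically rewritten) is a linear subspace of the maps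
`U → ℝᵐ`, evaluation at `x₀ ∈ U` is an injective linear map on it, and hence it is
finite dimensional of dimension at most `m`. -/
theorem solutionSpace_finiteDimensional
    {n m : ℕ} {U : Set (EuclideanSpace ℝ (Fin n))}
    (hUopen : IsOpen U) (hUconn : IsConnected U)
    {x₀ : EuclideanSpace ℝ (Fin n)} (hx₀ : x₀ ∈ U)
    (A : EuclideanSpace ℝ (Fin n) →
      (EuclideanSpace ℝ (Fin n) →L[ℝ] (EuclideanSpace ℝ (Fin m) →L[ℝ] EuclideanSpace ℝ (Fin m))))
    (hA : ContinuousOn A U) :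
    ∃ S : Submodule ℝ (↥U → EuclideanSpace ℝ (Fin m)),
      (S : Set (↥U → EuclideanSpace ℝ (Fin m))) =
        {t | ∃ s : EuclideanSpace ℝ (Fin n) → EuclideanSpace ℝ (Fin m),
          (∀ x ∈ U, DifferentiableAt ℝ s x) ∧
          ContinuousOn (fun x => fderiv ℝ s x) U ∧
          (∀ x ∈ U, ∀ v, fderiv ℝ s x v = A x v (s x)) ∧
          t = fun u : ↥U => s u} ∧
      (∃ ev : S →ₗ[ℝ] EuclideanSpace ℝ (Fin m),
        (∀ t : S, ev t = (t : ↥U → EuclideanSpace ℝ (Fin m)) ⟨x₀, hx₀⟩) ∧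
        Function.Injective ev) ∧
      FiniteDimensional ℝ S ∧ Module.finrank ℝ S ≤ m := by
  have hinj := solutionEval_injective hUopen hUconn.isPreconnected hA hx₀
  refine ⟨solutionSubmodule U A, rfl, ⟨solutionEval A hx₀, fun _ => rfl, hinj⟩,
    .of_injective _ hinj, ?_⟩
  simpa using LinearMap.finrank_le_finrank_of_injective hinj
end
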